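/- arXiv:1603.01179 — 2 statements merged into one kernel-verified Lean document; each statement's English description precedes it below -/
import Mathlib

section
/- Let G₃ be the graph on vertex set {a,b,c,d,e,f,g,h,i,j} with edge set {ab, bc, cd, de, fg, gh, hi, ij, af, ej, ag, gc, bg, bh, ie, dj}. Then G₃ is strongly 1-laminar (every diametral path of G₃ is 1-dominating), but G₃ is not AT-free: (g,i,d) is an asteroidal triple. Hence the class of strongly 1-laminar graphs is not contained in the class of AT-free graphs. -/
open SimpleGraph

/-- A walk `p` is a diametral path: a shortest path between two vertices at distance `diam G`. -/
def IsDiametralPath {V : Type*} (G : SimpleGraph V) {u v : V} (p : G.Walk u v) : Prop :=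
  p.length = G.dist u v ∧ G.dist u v = G.diam

/-- A walk `p` is `k`-dominating: every vertex of `G` is at distance at most `k`
from some vertex of `p`. -/
def IsKDominating {V : Type*} (G : SimpleGraph V) (k : ℕ) {u v : V} (p : G.Walk u v) : Prop :=
  ∀ x : V, ∃ y ∈ p.support, G.dist x y ≤ k

/-- `G` is `k`-laminar: it has a `k`-dominating diametral path. -/
def KLaminar {V : Type*} (G : SimpleGraph V) (k : ℕ) : Prop :=
  ∃ (u v : V) (p : G.Walk u v), IsDiametralPath G p ∧ IsKDominating G k p

/-- `G` is strongly `k`-laminar: every diametral path of `G` is `k`-dominating. -/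
def StronglyKLaminar {V : Type*} (G : SimpleGraph V) (k : ℕ) : Prop :=
  ∀ (u v : V) (p : G.Walk u v), IsDiametralPath G p → IsKDominating G k p

/-- There is a walk from `a` to `b` avoiding the closed neighborhood of `c`. -/
def WalkAvoiding {V : Type*} (G : SimpleGraph V) (a b c : V) : Prop :=
  ∃ p : G.Walk a b, ∀ x ∈ p.support, x ≠ c ∧ ¬ G.Adj c x

/-- `(a, b, c)` is an asteroidal triple of `G`. -/
def IsAsteroidalTriple {V : Type*} (G : SimpleGraph V) (a b c : V) : Prop :=
  a ≠ b ∧ a ≠ c ∧ b ≠ c ∧ ¬ G.Adj a b ∧ ¬ G.Adj a c ∧ ¬ G.Adj b c ∧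
    WalkAvoiding G a b c ∧ WalkAvoiding G a c b ∧ WalkAvoiding G b c a

/-- `G` is AT-free if it contains no asteroidal triple. -/
def ATFree {V : Type*} (G : SimpleGraph V) : Prop :=
  ∀ a b c : V, ¬ IsAsteroidalTriple G a b c

/-- The graph `G₃` on vertices `a, …, j` (encoded as `0, …, 9`) with edges
`ab, bc, cd, de, fg, gh, hi, ij, af, ej, ag, gc, bg, bh, ie, dj`. -/
def G3 : SimpleGraph (Fin 10) :=
  SimpleGraph.fromRel (fun u v =>
    (u, v) ∈ [((0:Fin 10),(1:Fin 10)),(1,2),(2,3),(3,4),(5,6),(6,7),(7,8),(8,9),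
      (0,5),(4,9),(0,6),(6,2),(1,6),(1,7),(8,4),(3,9)])

/-!
Everything is a finite check on the ten-vertex graph. Distances are certified by exhibiting a walk
of the claimed length and showing that no shorter walk exists; they give `diam G₃ = 4`. A
diametral path is then a walk of length `4` between two vertices at distance `4`, and there are
finitely many of them, each of which meets the closed neighborhood of every vertex. The
asteroidal triple `(g, i, d)` is witnessed by the paths `g h i`, `g c d` and `i j d`.
-/

namespace SimpleGraph

variable {V : Type*} {G : SimpleGraph V}

lemma dist_eq_of_finsetWalkLength [DecidableEq V] [G.LocallyFinite] {u v : V} {n : ℕ}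
    (hn : (G.finsetWalkLength n u v).Nonempty)
    (hlt : ∀ m < n, G.finsetWalkLength m u v = ∅) : G.dist u v = n := by
  obtain ⟨p, hp⟩ := hn
  rw [mem_finsetWalkLength_iff] at hp
  obtain ⟨q, hq⟩ := Reachable.exists_walk_length_eq_dist ⟨p⟩
  refine (hp ▸ dist_le p).eq_of_not_lt fun hlt' => ?_
  simpa [hlt _ hlt'] using (mem_finsetWalkLength_iff (G := G)).mpr hq

lemma diam_eq_of_forall_dist_le (hG : G.Preconnected) {n : ℕ} (hle : ∀ x y, G.dist x y ≤ n)
    {u v : V} (huv : G.dist u v = n) : G.diam = n := by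
  have hediam : G.ediam ≤ n := ediam_le_of_edist_le fun x y => by
    rw [← (hG x y).coe_dist_eq_edist]
    exact_mod_cast hle x y
  refine le_antisymm ?_ (huv ▸ dist_le_diam (ne_top_of_le_ne_top (ENat.natCast_ne_top n) hediam))
  exact ENat.toNat_le_of_le_natCast hediam

end SimpleGraph

section

variable {V : Type*} {G : SimpleGraph V}

lemma stronglyKLaminar_of_finsetWalkLength [DecidableEq V] [G.LocallyFinite] {k : ℕ}
    (h : ∀ u v, G.dist u v = G.diam →
      ∀ p ∈ G.finsetWalkLength G.diam u v, IsKDominating G k p) :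
    StronglyKLaminar G k := fun u v p ⟨hlen, hdiam⟩ =>
  h u v hdiam p (mem_finsetWalkLength_iff.mpr (hlen.trans hdiam))

lemma isKDominating_one_of_forall_eq_or_adj {u v : V} {p : G.Walk u v}
    (h : ∀ x, ∃ y ∈ p.support, x = y ∨ G.Adj x y) : IsKDominating G 1 p := fun x => by
  obtain ⟨y, hy, rfl | hxy⟩ := h x
  · exact ⟨x, hy, by simp⟩
  · exact ⟨y, hy, (dist_eq_one_iff_adj.mpr hxy).le⟩

lemma walkAvoiding_of_adj_adj {a m b c : V} (ham : G.Adj a m) (hmb : G.Adj m b)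
    (h : ∀ x ∈ [a, m, b], x ≠ c ∧ ¬ G.Adj c x) : WalkAvoiding G a b c :=
  ⟨.cons ham (.cons hmb .nil), by simpa using h⟩

end

instance : DecidableRel G3.Adj := fun u v =>
  decidable_of_iff _ (fromRel_adj _ u v).symm

def G3.distTable : Fin 10 → Fin 10 → ℕ :=
  ![![0, 1, 2, 3, 4, 1, 1, 2, 3, 4],
    ![1, 0, 1, 2, 3, 2, 1, 1, 2, 3],
    ![2, 1, 0, 1, 2, 2, 1, 2, 3, 2],
    ![3, 2, 1, 0, 1, 3, 2, 3, 2, 1],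
    ![4, 3, 2, 1, 0, 4, 3, 2, 1, 1],
    ![1, 2, 2, 3, 4, 0, 1, 2, 3, 4],
    ![1, 1, 1, 2, 3, 1, 0, 1, 2, 3],
    ![2, 1, 2, 3, 2, 2, 1, 0, 1, 2],
    ![3, 2, 3, 2, 1, 3, 2, 1, 0, 1],
    ![4, 3, 2, 1, 1, 4, 3, 2, 1, 0]]

lemma G3_finsetWalkLength_distTable :
    ∀ u v, (G3.finsetWalkLength (G3.distTable u v) u v).Nonempty ∧
      ∀ m < G3.distTable u v, G3.finsetWalkLength m u v = ∅ := by
  decide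

lemma G3_dist_eq_distTable (u v : Fin 10) : G3.dist u v = G3.distTable u v :=
  dist_eq_of_finsetWalkLength (G3_finsetWalkLength_distTable u v).1
    (G3_finsetWalkLength_distTable u v).2

lemma G3_preconnected : G3.Preconnected := fun u v =>
  let ⟨p, _⟩ := (G3_finsetWalkLength_distTable u v).1; ⟨p⟩

lemma G3_diam : G3.diam = 4 :=
  diam_eq_of_forall_dist_le G3_preconnected
    (fun u v => G3_dist_eq_distTable u v ▸ (by decide : ∀ u v, G3.distTable u v ≤ 4) u v)
    (G3_dist_eq_distTable 0 4)

lemma G3_stronglyKLaminar_one : StronglyKLaminar G3 1 := by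
  have hdom : ∀ u v, G3.distTable u v = 4 → ∀ p ∈ G3.finsetWalkLength 4 u v,
      ∀ x, ∃ y ∈ p.support, x = y ∨ G3.Adj x y := by
    decide
  refine stronglyKLaminar_of_finsetWalkLength fun u v huv p hp => ?_
  rw [G3_diam, G3_dist_eq_distTable] at huv
  rw [G3_diam] at hp
  exact isKDominating_one_of_forall_eq_or_adj (hdom u v huv p hp)

lemma G3_isAsteroidalTriple : IsAsteroidalTriple G3 6 8 3 := by
  refine ⟨by decide, by decide, by decide, by decide, by decide, by decide, ?_, ?_, ?_⟩
  · exact walkAvoiding_of_adj_adj (m := 7) (by decide) (by decide) (by decide)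
  · exact walkAvoiding_of_adj_adj (m := 2) (by decide) (by decide) (by decide)
  · exact walkAvoiding_of_adj_adj (m := 9) (by decide) (by decide) (by decide)

/-- `G₃` is strongly 1-laminar (every diametral path is 1-dominating), but `(g, i, d)` is an
asteroidal triple, so `G₃` is not AT-free: the class of strongly 1-laminar graphs is not
contained in the class of AT-free graphs. -/
theorem strongly_one_laminar_not_subset_ATFree :
    StronglyKLaminar G3 1 ∧ IsAsteroidalTriple G3 6 8 3 ∧ ¬ ATFree G3 :=
  ⟨G3_stronglyKLaminar_one, G3_isAsteroidalTriple, fun h => h 6 8 3 G3_isAsteroidalTriple⟩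
end

section
/- For every 3SAT formula φ on n boolean variables (n even, n ≥ 4), the graph G(φ) is connected and diam(G(φ)) = 3n − 1 = d(V₁, V_{2n}). -/
open SimpleGraph

/-- Vertices of the graph `G(φ)` associated with a 3SAT formula `φ` with `m` clauses over `n`
boolean variables (`n` even):
* `lit i b` is the literal vertex `X_{i+1}` (if `b = true`) or `X̄_{i+1}` (if `b = false`);
* `chain k` is the vertex `V_{k+1}` of the two pending chains `V₁ — ⋯ — V_n` and
  `V_{n+1} — ⋯ — V_{2n}`;
* `clause j` is the vertex of the clause `C_{j+1}`;
* `inner j t s` is the `(s+1)`-st internal vertex of the path of length `n/2 + 1` (with `n/2`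
  internal vertices) joining the clause vertex `C_{j+1}` to the vertex of its `(t+1)`-st
  literal. -/
inductive Vert (n m : ℕ) : Type
  | lit : Fin n → Bool → Vert n m
  | chain : Fin (2 * n) → Vert n m
  | clause : Fin m → Vert n m
  | inner : Fin m → Fin 3 → Fin (n / 2) → Vert n m
  deriving DecidableEq

/-- The base (asymmetric) adjacency relation of `G(φ)`, where the 3SAT formula `φ` assigns to
each clause index `j` and each slot `t ∈ {0,1,2}` a literal `φ j t = (i, b)` (variable index
`i`, polarity `b`):
* `X_i` and `X̄_i` are adjacent, and every vertex of `{X_i, X̄_i}` is adjacent to every vertex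
  of `{X_{i+1}, X̄_{i+1}}`;
* `V₁ — ⋯ — V_n` and `V_{n+1} — ⋯ — V_{2n}` are paths, `V_n` is moreover adjacent to both
  `X₁, X̄₁` and `V_{n+1}` to both `X_n, X̄_n`;
* each clause vertex `C_j` is joined to the vertex of each of its literals by a path of length
  `n/2 + 1` whose `n/2` internal vertices are the `inner j t s`. -/
def satRel (n m : ℕ) (φ : Fin m → Fin 3 → Fin n × Bool) : Vert n m → Vert n m → Prop
  | .lit i b, .lit i' b' => (i = i' ∧ b ≠ b') ∨ (i : ℕ) + 1 = (i' : ℕ)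
  | .chain k, .chain k' => (k : ℕ) + 1 = (k' : ℕ) ∧ (k' : ℕ) ≠ n
  | .chain k, .lit i _ => ((k : ℕ) = n - 1 ∧ (i : ℕ) = 0) ∨ ((k : ℕ) = n ∧ (i : ℕ) = n - 1)
  | .clause j, .inner j' _ s => j = j' ∧ (s : ℕ) = 0
  | .inner j t s, .inner j' t' s' => j = j' ∧ t = t' ∧ (s : ℕ) + 1 = (s' : ℕ)
  | .inner j t s, .lit i b => (s : ℕ) = n / 2 - 1 ∧ φ j t = (i, b)
  | _, _ => False

/-- The graph `G(φ)` associated with a 3SAT formula `φ`. -/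
def Gphi (n m : ℕ) (φ : Fin m → Fin 3 → Fin n × Bool) : SimpleGraph (Vert n m) :=
  SimpleGraph.fromRel (satRel n m φ)

/-!
Every vertex lies within distance `n` of a literal vertex (a clause path has length
`n / 2 + 1 ≤ n`), and any two literal vertices lie within distance `n - 1` of each other along
the ladder of literals; hence all distances are at most `n + (n - 1) + n = 3n - 1`. Conversely,
a potential that changes by at most one along every edge takes the values `0` at `V₁` and
`3n - 1` at `V_{2n}`, so `d(V₁, V_{2n}) ≥ 3n - 1`.
-/

namespace SimpleGraph

variable {V : Type*} {G : SimpleGraph V}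

lemma edist_le_add_of_le {u v w : V} {a b : ℕ} (huv : G.edist u v ≤ a)
    (hvw : G.edist v w ≤ b) : G.edist u w ≤ (a + b : ℕ) :=
  G.edist_triangle.trans (by push_cast; exact add_le_add huv hvw)

lemma edist_le_of_adj_succ (p : ℕ → V) {a b : ℕ} (hab : a ≤ b)
    (hp : ∀ k, a ≤ k → k < b → G.Adj (p k) (p (k + 1))) :
    G.edist (p a) (p b) ≤ (b - a : ℕ) := by
  induction b, hab using Nat.le_induction with
  | base => simp
  | succ b hab ih =>
    have hstep : G.edist (p b) (p (b + 1)) ≤ (1 : ℕ) :=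
      (edist_eq_one_iff_adj.mpr (hp b hab b.lt_succ_self)).le
    simpa [Nat.sub_add_comm hab] using
      edist_le_add_of_le (ih fun k hak hkb => hp k hak (hkb.trans b.lt_succ_self)) hstep

lemma Walk.apply_le_apply_add_length (f : V → ℕ) (hf : ∀ u v, G.Adj u v → f v ≤ f u + 1)
    {u v : V} (w : G.Walk u v) : f v ≤ f u + w.length := by
  induction w with
  | nil => simp
  | cons h w ih => have := hf _ _ h; simp only [Walk.length_cons]; omega

lemma Reachable.apply_le_apply_add_dist (f : V → ℕ) (hf : ∀ u v, G.Adj u v → f v ≤ f u + 1)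
    {u v : V} (h : G.Reachable u v) : f v ≤ f u + G.dist u v := by
  obtain ⟨w, hw⟩ := h.exists_walk_length_eq_dist
  exact hw ▸ w.apply_le_apply_add_length f hf

lemma diam_eq_of_forall_edist_le {D : ℕ} (h : ∀ u v, G.edist u v ≤ D) {u v : V}
    (huv : D ≤ G.dist u v) : G.diam = D :=
  have hD : G.ediam ≤ D := ediam_le_of_edist_le h
  le_antisymm (ENat.toNat_le_of_le_natCast hD)
    (huv.trans (dist_le_diam (ne_top_of_le_ne_top (ENat.natCast_ne_top D) hD)))

end SimpleGraph

namespace Gphi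

variable {n m : ℕ} {φ : Fin m → Fin 3 → Fin n × Bool}

lemma adj_of_satRel {u v : Vert n m} (hne : u ≠ v) (h : satRel n m φ u v) :
    (Gphi n m φ).Adj u v :=
  (fromRel_adj _ _ _).mpr ⟨hne, Or.inl h⟩

lemma edist_chain_lit_zero_le (hn : 0 < n) (k : Fin (2 * n)) (hk : (k : ℕ) < n) (b : Bool) :
    (Gphi n m φ).edist (.chain k) (.lit ⟨0, hn⟩ b) ≤ (n - k : ℕ) := by
  let p : ℕ → Vert n m := fun l =>
    if h : l < n then .chain ⟨l, by omega⟩ else .lit ⟨0, hn⟩ b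
  have hp : ∀ l, (k : ℕ) ≤ l → l < n → (Gphi n m φ).Adj (p l) (p (l + 1)) := by
    intro l _ hl
    by_cases hl' : l + 1 < n
    · simp only [p, dif_pos hl, dif_pos hl']
      exact adj_of_satRel (by simp) ⟨rfl, by dsimp only; omega⟩
    · simp only [p, dif_pos hl, dif_neg hl']
      exact adj_of_satRel (by simp) (Or.inl ⟨by dsimp only; omega, rfl⟩)
  simpa [p, hk] using edist_le_of_adj_succ p hk.le hp

lemma edist_lit_last_chain_le (hn : 0 < n) (b : Bool) (k : Fin (2 * n)) (hk : n ≤ (k : ℕ)) :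
    (Gphi n m φ).edist (.lit ⟨n - 1, by omega⟩ b) (.chain k) ≤ (k + 1 - n : ℕ) := by
  let p : ℕ → Vert n m := fun l =>
    if h : n ≤ l ∧ l < 2 * n then .chain ⟨l, h.2⟩ else .lit ⟨n - 1, by omega⟩ b
  have hp : ∀ l, n - 1 ≤ l → l < k → (Gphi n m φ).Adj (p l) (p (l + 1)) := by
    intro l _ hl
    have hl' : n ≤ l + 1 ∧ l + 1 < 2 * n := by omega
    by_cases hnl : n ≤ l
    · simp only [p, dif_pos (And.intro hnl (by omega : l < 2 * n)), dif_pos hl']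
      exact adj_of_satRel (by simp) ⟨rfl, by dsimp only; omega⟩
    · simp only [p, dif_neg (fun h : n ≤ l ∧ l < 2 * n => hnl h.1), dif_pos hl']
      refine Adj.symm (adj_of_satRel (by simp) (Or.inr ⟨?_, rfl⟩))
      dsimp only; omega
  have := edist_le_of_adj_succ p (by omega : n - 1 ≤ k) hp
  simp only [p, show ¬(n ≤ n - 1 ∧ n - 1 < 2 * n) by omega, dif_neg, not_false_eq_true,
    dif_pos (And.intro hk k.isLt)] at this
  exact this.trans (by norm_cast; omega)

def clausePath (φ : Fin m → Fin 3 → Fin n × Bool) (j : Fin m) (t : Fin 3) : ℕ → Vert n m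
  | 0 => .clause j
  | s + 1 => if h : s < n / 2 then .inner j t ⟨s, h⟩ else .lit (φ j t).1 (φ j t).2

lemma clausePath_adj (hn : 2 ≤ n) (j : Fin m) (t : Fin 3) {s : ℕ} (hs : s ≤ n / 2) :
    (Gphi n m φ).Adj (clausePath φ j t s) (clausePath φ j t (s + 1)) := by
  rcases s with _ | s
  · simp only [clausePath, dif_pos (by omega : 0 < n / 2)]
    exact adj_of_satRel (by simp) ⟨rfl, rfl⟩
  · by_cases hs' : s + 1 < n / 2
    · simp only [clausePath, dif_pos (by omega : s < n / 2), dif_pos hs']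
      exact adj_of_satRel (by simp) ⟨rfl, rfl, rfl⟩
    · simp only [clausePath, dif_pos (by omega : s < n / 2), dif_neg hs']
      exact adj_of_satRel (by simp) ⟨by dsimp only; omega, rfl⟩

lemma edist_clausePath_le (hn : 2 ≤ n) (j : Fin m) (t : Fin 3) {s : ℕ} (hs : s ≤ n / 2 + 1) :
    (Gphi n m φ).edist (clausePath φ j t s) (.lit (φ j t).1 (φ j t).2) ≤
      (n / 2 + 1 - s : ℕ) := by
  have hend : clausePath φ j t (n / 2 + 1) = .lit (φ j t).1 (φ j t).2 := by simp [clausePath]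
  exact hend ▸ edist_le_of_adj_succ _ hs fun l _ hl => clausePath_adj hn j t (by omega)

lemma edist_lit_lit_of_lt {i i' : Fin n} (b b' : Bool) (h : i < i') :
    (Gphi n m φ).edist (.lit i b) (.lit i' b') ≤ (i' - i : ℕ) := by
  let p : ℕ → Vert n m := fun l => if h : l < i' then .lit ⟨l, by omega⟩ b else .lit i' b'
  have hp : ∀ l, (i : ℕ) ≤ l → l < i' → (Gphi n m φ).Adj (p l) (p (l + 1)) := by
    intro l _ hl
    by_cases hl' : l + 1 < i'
    · simp only [p, dif_pos hl, dif_pos hl']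
      exact adj_of_satRel (by simp) (Or.inr rfl)
    · simp only [p, dif_pos hl, dif_neg hl']
      exact adj_of_satRel (by simp [Fin.ext_iff]; omega) (Or.inr (by dsimp only; omega))
  simpa [p, h] using edist_le_of_adj_succ p h.le hp

lemma edist_lit_lit_le (hn : 2 ≤ n) (i i' : Fin n) (b b' : Bool) :
    (Gphi n m φ).edist (.lit i b) (.lit i' b') ≤ (n - 1 : ℕ) := by
  rcases lt_trichotomy i i' with h | rfl | h
  · exact (edist_lit_lit_of_lt b b' h).trans (by norm_cast; omega)
  · by_cases hb : b = b'
    · simp [hb]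
    · have hadj : (Gphi n m φ).Adj (.lit i b) (.lit i b') :=
        adj_of_satRel (by simp [hb]) (Or.inl ⟨rfl, hb⟩)
      rw [edist_eq_one_iff_adj.mpr hadj]
      exact_mod_cast (by omega : 1 ≤ n - 1)
  · rw [edist_comm]
    exact (edist_lit_lit_of_lt b' b h).trans (by norm_cast; omega)

lemma exists_lit_edist_le (hn : 2 ≤ n) (u : Vert n m) :
    ∃ i b, (Gphi n m φ).edist u (.lit i b) ≤ n := by
  cases u with
  | lit i b => exact ⟨i, b, by simp⟩
  | chain k =>
    by_cases hk : (k : ℕ) < n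
    · exact ⟨_, true,
        (edist_chain_lit_zero_le (by omega) k hk true).trans (by norm_cast; omega)⟩
    · refine ⟨⟨n - 1, by omega⟩, true, ?_⟩
      rw [edist_comm]
      exact (edist_lit_last_chain_le (by omega) true k (by omega)).trans
        (by norm_cast; omega)
  | clause j =>
    exact ⟨_, _, (edist_clausePath_le hn j 0 (s := 0) (by omega)).trans (by norm_cast; omega)⟩
  | inner j t s =>
    have h := edist_clausePath_le (φ := φ) hn j t (s := s + 1) (by omega)
    simp only [clausePath, dif_pos s.isLt] at h
    exact ⟨_, _, h.trans (by norm_cast; omega)⟩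

lemma edist_le_three_mul_sub_one (hn : 2 ≤ n) (u v : Vert n m) :
    (Gphi n m φ).edist u v ≤ (3 * n - 1 : ℕ) := by
  obtain ⟨i, b, hu⟩ := exists_lit_edist_le (φ := φ) hn u
  obtain ⟨i', b', hv⟩ := exists_lit_edist_le (φ := φ) hn v
  rw [edist_comm] at hv
  exact (edist_le_add_of_le (edist_le_add_of_le hu (edist_lit_lit_le hn i i' b b')) hv).trans
    (by norm_cast; omega)

/-- `V_{k+1}` sits at height `k` on the first chain and `n + k` on the second, `X_i` at height
`n + i - 1`, and `C_j` at `n + n / 2`; along a clause path the height moves from `C_j` towards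
that of the literal but stops once it gets there, so clause paths never shortcut the ladder. -/
def potential (φ : Fin m → Fin 3 → Fin n × Bool) : Vert n m → ℕ
  | .lit i _ => n + i
  | .chain k => if (k : ℕ) < n then k else k + n
  | .clause _ => n + n / 2
  | .inner j t s =>
      if ((φ j t).1 : ℕ) ≤ n / 2 then max (n + (φ j t).1) (n + n / 2 - (s + 1))
      else min (n + (φ j t).1) (n + n / 2 + (s + 1))

lemma potential_le_of_satRel {u v : Vert n m} (h : satRel n m φ u v) :
    potential φ u ≤ potential φ v + 1 ∧ potential φ v ≤ potential φ u + 1 := by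
  cases u <;> cases v <;> simp only [satRel] at h
  case lit.lit =>
    obtain ⟨rfl, -⟩ | h := h <;> simp only [potential] <;> omega
  case inner.inner =>
    obtain ⟨rfl, rfl, hs⟩ := h
    simp only [potential]; split_ifs <;> omega
  case inner.lit j t s i b =>
    obtain ⟨hs, hφ⟩ := h
    have := s.isLt
    simp only [potential, hφ]; split_ifs <;> omega
  all_goals simp only [potential]; split_ifs <;> omega

lemma potential_le_of_adj {u v : Vert n m} (h : (Gphi n m φ).Adj u v) :
    potential φ v ≤ potential φ u + 1 := by
  obtain ⟨-, h | h⟩ := (fromRel_adj _ _ _).mp h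
  exacts [(potential_le_of_satRel h).2, (potential_le_of_satRel h).1]

end Gphi

/-- For every 3SAT formula `φ` on `n` boolean variables (`n` even, `n ≥ 4`), the graph `G(φ)`
is connected and `diam G(φ) = 3n − 1 = d(V₁, V_{2n})`. -/
theorem Gphi_connected_and_diam (n m : ℕ) (h4 : 4 ≤ n)
    (φ : Fin m → Fin 3 → Fin n × Bool) :
    (Gphi n m φ).Connected ∧
    (Gphi n m φ).diam = 3 * n - 1 ∧
    (Gphi n m φ).dist (Vert.chain ⟨0, by omega⟩) (Vert.chain ⟨2 * n - 1, by omega⟩)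
      = 3 * n - 1 := by
  have hle := Gphi.edist_le_three_mul_sub_one (φ := φ) (by omega : 2 ≤ n)
  have : Nonempty (Vert n m) := ⟨.chain ⟨0, by omega⟩⟩
  have hconn : (Gphi n m φ).Connected := connected_of_ediam_ne_top <|
    ne_top_of_le_ne_top (ENat.natCast_ne_top _) (ediam_le_of_edist_le hle)
  set V₁ : Vert n m := .chain ⟨0, by omega⟩
  set V₂ₙ : Vert n m := .chain ⟨2 * n - 1, by omega⟩
  have hpot := (hconn.preconnected V₁ V₂ₙ).apply_le_apply_add_dist (Gphi.potential φ)
    fun _ _ => Gphi.potential_le_of_adj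
  have hV₁ : Gphi.potential φ V₁ = 0 := if_pos (show 0 < n by omega)
  have hV₂ₙ : Gphi.potential φ V₂ₙ = 2 * n - 1 + n := if_neg (show ¬2 * n - 1 < n by omega)
  have hdist : (Gphi n m φ).dist V₁ V₂ₙ = 3 * n - 1 :=
    le_antisymm (ENat.toNat_le_of_le_natCast (hle _ _)) (by omega)
  exact ⟨hconn, diam_eq_of_forall_edist_le hle hdist.ge, hdist⟩
end
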